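/- There exists an absolute constant c > 0 such that the following holds. Let H be a real Hilbert space, n ≥ 2 an integer, 0 < δ ≤ 1, and let P_1, …, P_n be orthogonal projections on H. If there exists a permutation σ of {1, …, n} such that ‖P_{σ(n)} P_{σ(n−1)} ⋯ P_{σ(1)}‖ ≤ 1 − δ, then ‖(1/n) Σ_{i=1}^n P_i‖ ≤ 1 − c (δ / (n² log(n/δ)))². -/

import Mathlib

open scoped RealInnerProductSpace

universe u

/-- A bounded operator on a real Hilbert space is an orthogonal projection if it is
self-adjoint and idempotent. -/
def IsOrthProj {H : Type u} [NormedAddCommGroup H] [InnerProductSpace ℝ H]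
    (P : H →L[ℝ] H) : Prop :=
  (∀ x y : H, ⟪P x, y⟫ = ⟪x, P y⟫) ∧ ∀ x : H, P (P x) = P x

/-! A unit vector `x` is moved by at least `δ` by the scan, and telescoping through the scan
bounds that displacement by `∑ ‖x - P i x‖`. As `‖P i x‖ ^ 2 + ‖x - P i x‖ ^ 2 = 1`, Cauchy–Schwarz
on both sums gives `‖∑ P i x‖ ^ 2 + (∑ ‖x - P i x‖) ^ 2 ≤ n ^ 2`, so the average has norm at most
`√(1 - (δ / n) ^ 2) ≤ 1 - (δ / n) ^ 2 / 2`. This beats the claimed bound with `c = 1 / 2`, since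
`n log (n / δ) ≥ 2 log 2 > 1`. -/

namespace IsOrthProj

variable {H : Type*} [NormedAddCommGroup H] [InnerProductSpace ℝ H] {P : H →L[ℝ] H}

theorem inner_apply_self (hP : IsOrthProj P) (x : H) : ⟪P x, x⟫ = ‖P x‖ ^ 2 := by
  rw [← real_inner_self_eq_norm_sq, hP.1 x (P x), hP.2, real_inner_comm]

theorem norm_sq_apply_add_norm_sq_sub (hP : IsOrthProj P) (x : H) :
    ‖P x‖ ^ 2 + ‖x - P x‖ ^ 2 = ‖x‖ ^ 2 := by
  rw [norm_sub_sq_real, real_inner_comm, hP.inner_apply_self]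
  ring

theorem norm_apply_le (hP : IsOrthProj P) (x : H) : ‖P x‖ ≤ ‖x‖ :=
  (pow_le_pow_iff_left₀ (norm_nonneg _) (norm_nonneg _) two_ne_zero).1 <| by
    linarith [hP.norm_sq_apply_add_norm_sq_sub x, sq_nonneg ‖x - P x‖]

theorem opNorm_le_one (hP : IsOrthProj P) : ‖P‖ ≤ 1 :=
  P.opNorm_le_bound zero_le_one fun x => by simpa using hP.norm_apply_le x

end IsOrthProj

section Scan

variable {𝕜 E : Type*} [NontriviallyNormedField 𝕜] [NormedAddCommGroup E] [NormedSpace 𝕜 E]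

theorem List.norm_sub_prod_apply_le (x : E) :
    ∀ L : List (E →L[𝕜] E), (∀ Q ∈ L, ‖Q‖ ≤ 1) →
      ‖x - L.prod x‖ ≤ (L.map fun Q => ‖x - Q x‖).sum
  | [], _ => by simp
  | Q :: L, hL => by
    have hQ : ‖Q (x - L.prod x)‖ ≤ ‖x - L.prod x‖ := by
      simpa using Q.le_of_opNorm_le (hL Q List.mem_cons_self) (x - L.prod x)
    have ih := norm_sub_prod_apply_le x L fun R hR => hL R (List.mem_cons_of_mem _ hR)
    calc ‖x - (Q :: L).prod x‖ ≤ ‖x - Q x‖ + ‖Q x - Q (L.prod x)‖ := by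
          simpa using norm_sub_le_norm_sub_add_norm_sub x (Q x) (Q (L.prod x))
      _ ≤ ‖x - Q x‖ + (L.map fun Q => ‖x - Q x‖).sum := by
          rw [← map_sub]; linarith
      _ = ((Q :: L).map fun Q => ‖x - Q x‖).sum := by simp

theorem mul_norm_le_sum_norm_sub_of_norm_scan_le {n : ℕ} (P : Fin n → E →L[𝕜] E)
    (hP : ∀ i, ‖P i‖ ≤ 1) (σ : Equiv.Perm (Fin n)) {δ : ℝ}
    (hσ : ‖((List.ofFn fun j => P (σ j)).reverse).prod‖ ≤ 1 - δ) (x : E) :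
    δ * ‖x‖ ≤ ∑ i, ‖x - P i x‖ := by
  set L := (List.ofFn fun j => P (σ j)).reverse
  have hL : ∀ Q ∈ L, ‖Q‖ ≤ 1 := by
    simp only [L, List.mem_reverse, List.mem_ofFn]
    rintro _ ⟨j, rfl⟩
    exact hP _
  have hsum : (L.map fun Q => ‖x - Q x‖).sum = ∑ i, ‖x - P i x‖ := by
    simp only [L, List.map_reverse, List.sum_reverse, List.map_ofFn, List.sum_ofFn]
    exact Equiv.sum_comp σ fun i => ‖x - P i x‖
  calc δ * ‖x‖ ≤ ‖x‖ - ‖L.prod x‖ := by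
        nlinarith [L.prod.le_opNorm x, norm_nonneg x]
    _ ≤ ‖x - L.prod x‖ := norm_sub_norm_le _ _
    _ ≤ ∑ i, ‖x - P i x‖ := hsum ▸ L.norm_sub_prod_apply_le x hL

end Scan

section Average

variable {H : Type*} [NormedAddCommGroup H] [InnerProductSpace ℝ H]

theorem sq_norm_sum_apply_add_sq_sum_norm_sub_le {ι : Type*} [Fintype ι]
    (P : ι → H →L[ℝ] H) (hP : ∀ i, IsOrthProj (P i)) (x : H) :
    ‖∑ i, P i x‖ ^ 2 + (∑ i, ‖x - P i x‖) ^ 2 ≤ (Fintype.card ι * ‖x‖) ^ 2 := by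
  have hsum : ‖∑ i, P i x‖ ^ 2 ≤ (∑ i, ‖P i x‖) ^ 2 := by
    gcongr
    exact norm_sum_le _ _
  have hcs₁ := sq_sum_le_card_mul_sum_sq (s := Finset.univ) (f := fun i => ‖P i x‖)
  have hcs₂ := sq_sum_le_card_mul_sum_sq (s := Finset.univ) (f := fun i => ‖x - P i x‖)
  have hpyth : ∑ i, (‖P i x‖ ^ 2 + ‖x - P i x‖ ^ 2) = Fintype.card ι * ‖x‖ ^ 2 := by
    simp [(hP _).norm_sq_apply_add_norm_sq_sub]
  rw [Finset.sum_add_distrib] at hpyth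
  simp only [Finset.card_univ] at hcs₁ hcs₂
  nlinarith

theorem norm_average_le_of_norm_scan_le {n : ℕ} (hn : n ≠ 0) (P : Fin n → H →L[ℝ] H)
    (hP : ∀ i, IsOrthProj (P i)) (σ : Equiv.Perm (Fin n)) {δ : ℝ} (hδ : 0 ≤ δ)
    (hσ : ‖((List.ofFn fun j => P (σ j)).reverse).prod‖ ≤ 1 - δ) :
    ‖(n : ℝ)⁻¹ • ∑ j, P j‖ ≤ 1 - (δ / n) ^ 2 / 2 := by
  have hn' : (0 : ℝ) < n := by positivity
  have hδn : δ / n ≤ 1 := by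
    rw [div_le_one hn']
    linarith [norm_nonneg ((List.ofFn fun j => P (σ j)).reverse.prod),
      (Nat.one_le_cast (α := ℝ)).2 (Nat.one_le_iff_ne_zero.2 hn)]
  have hbound : 0 ≤ 1 - (δ / n) ^ 2 / 2 := by nlinarith [div_nonneg hδ hn'.le]
  refine ContinuousLinearMap.opNorm_le_bound _ hbound fun x => ?_
  have hscan := mul_norm_le_sum_norm_sub_of_norm_scan_le P (fun i => (hP i).opNorm_le_one) σ hσ x
  have havg := sq_norm_sum_apply_add_sq_sum_norm_sub_le P hP x
  simp only [Fintype.card_fin] at havg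
  have happly : ‖((n : ℝ)⁻¹ • ∑ j, P j) x‖ = (n : ℝ)⁻¹ * ‖∑ j, P j x‖ := by
    simp [norm_smul]
  rw [happly, inv_mul_le_iff₀ hn']
  refine (pow_le_pow_iff_left₀ (norm_nonneg _) (by positivity) two_ne_zero).1 ?_
  have hδx : (δ * ‖x‖) ^ 2 ≤ (∑ i, ‖x - P i x‖) ^ 2 := by gcongr
  calc ‖∑ j, P j x‖ ^ 2 ≤ (n * ‖x‖) ^ 2 - (δ * ‖x‖) ^ 2 := by linarith
    _ = (n * ‖x‖) ^ 2 * (1 - (δ / n) ^ 2) := by field_simp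
    _ ≤ (n * ((1 - (δ / n) ^ 2 / 2) * ‖x‖)) ^ 2 := by
        nlinarith [sq_nonneg ((δ / n) ^ 2 * (n * ‖x‖))]

end Average

theorem one_le_mul_log_div {n δ : ℝ} (hn : 2 ≤ n) (hδ : 0 < δ) (hδ1 : δ ≤ 1) :
    1 ≤ n * Real.log (n / δ) := by
  have hlog : Real.log 2 ≤ Real.log (n / δ) :=
    Real.log_le_log two_pos (by rw [le_div_iff₀ hδ]; nlinarith)
  nlinarith [Real.log_two_gt_d9]

/-- There is an absolute constant `c > 0` such that if some systematic scan of a family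
of orthogonal projections `P_1, …, P_n` (`n ≥ 2`) satisfies
`‖P_{σ(n)} ⋯ P_{σ(1)}‖ ≤ 1 - δ` (`0 < δ ≤ 1`), then
`‖(1/n) ∑ P_i‖ ≤ 1 - c (δ / (n² log(n/δ)))²`. -/
theorem glauber_gap_of_one_scan_gap :
    ∃ c : ℝ, 0 < c ∧
      ∀ (H : Type u) [NormedAddCommGroup H] [InnerProductSpace ℝ H] [CompleteSpace H]
        (n : ℕ), 2 ≤ n →
        ∀ (δ : ℝ), 0 < δ → δ ≤ 1 →
        ∀ (P : Fin n → H →L[ℝ] H), (∀ j, IsOrthProj (P j)) →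
        (∃ σ : Equiv.Perm (Fin n),
          ‖((List.ofFn fun j => P (σ j)).reverse).prod‖ ≤ 1 - δ) →
        ‖(n : ℝ)⁻¹ • ∑ j, P j‖ ≤ 1 - c * (δ / ((n : ℝ) ^ 2 * Real.log (n / δ))) ^ 2 := by
  refine ⟨1 / 2, one_half_pos, fun H _ _ _ n hn δ hδ hδ1 P hP ⟨σ, hσ⟩ => ?_⟩
  have hn' : (2 : ℝ) ≤ n := by exact_mod_cast hn
  have hnL := one_le_mul_log_div hn' hδ hδ1
  have hweaker : (δ / ((n : ℝ) ^ 2 * Real.log (n / δ))) ^ 2 ≤ (δ / n) ^ 2 := by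
    rw [pow_two (n : ℝ), mul_assoc, ← div_div]
    exact pow_le_pow_left₀ (by positivity) (div_le_self (by positivity) hnL) 2
  linarith [norm_average_le_of_norm_scan_le (by omega) P hP σ hδ.le hσ]
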